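/- arXiv:math/0610725 — 3 statements merged into one kernel-verified Lean document; each statement's English description precedes it below -/
import Mathlib

section
/- Part 2 of Lemma 5.1 (discrete core, boundary-error recursion): Let Δy > 0, K ≥ 0, ε̄ ≥ 0, R̄ ≥ 0, and let L ≥ 0 satisfy L·Δy < 1; set b = 1 − L·Δy. Let (u_i)_{i∈ℕ} be a sequence of nonnegative reals with u_0 ≤ R̄ and, for every i ≥ 1, u_i ≤ K·Δy·∑_{j=1}^{i} (b^j·u_{i−j} + j·Δy·ε̄) + R̄. Then for every i ∈ ℕ, u_i ≤ (R̄ + K·ε̄·(i·Δy)·((i+1)·Δy)/2)·(1 + K·Δy)^i, and in particular u_i ≤ (R̄ + K·ε̄·((i+1)Δy)²/2)·exp(K·i·Δy). -/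
open Finset Real in
/-- Part 2 of Lemma 5.1 (discrete core): boundary-error recursion. -/
theorem boundary_error_recursion_bound
    (Δy : ℝ) (hΔy : 0 < Δy)
    (K : ℝ) (hK : 0 ≤ K)
    (εbar : ℝ) (hεbar : 0 ≤ εbar)
    (Rbar : ℝ) (hRbar : 0 ≤ Rbar)
    (L : ℝ) (hL : 0 ≤ L) (hLΔy : L * Δy < 1)
    (b : ℝ) (hb : b = 1 - L * Δy)
    (u : ℕ → ℝ) (hu : ∀ i, 0 ≤ u i)
    (hu0 : u 0 ≤ Rbar)
    (hrec : ∀ i : ℕ, 1 ≤ i →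
      u i ≤ K * Δy * ∑ j ∈ Icc 1 i, (b ^ j * u (i - j) + j * Δy * εbar) + Rbar) :
    ∀ i : ℕ,
      u i ≤ (Rbar + K * εbar * (i * Δy) * ((i + 1) * Δy) / 2) * (1 + K * Δy) ^ i
        ∧ u i ≤ (Rbar + K * εbar * ((i + 1) * Δy) ^ 2 / 2) * exp (K * i * Δy) := by
  have hb0 : 0 ≤ b := by rw [hb]; linarith
  have hb1 : b ≤ 1 := by rw [hb]; nlinarith [mul_nonneg hL hΔy.le]
  set C : ℕ → ℝ := fun i => Rbar + K * εbar * (i * Δy) * ((i + 1) * Δy) / 2 with hC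
  have hCnn : ∀ i, 0 ≤ C i := by
    intro i
    have : (0:ℝ) ≤ (i:ℝ) := Nat.cast_nonneg i
    simp only [hC]
    positivity
  have hCmono : ∀ m i : ℕ, m ≤ i → C m ≤ C i := by
    intro m i h
    have h' : (m:ℝ) ≤ i := Nat.cast_le.mpr h
    have hm : (0:ℝ) ≤ (m:ℝ) := Nat.cast_nonneg m
    simp only [hC]
    have hmi : (m:ℝ) * (m + 1) ≤ (i:ℝ) * (i + 1) := by nlinarith
    have : K * εbar * (m * Δy) * ((m + 1) * Δy) ≤ K * εbar * (i * Δy) * ((i + 1) * Δy) := by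
      have e1 : K * εbar * (m * Δy) * ((m + 1) * Δy) = K * εbar * Δy ^ 2 * ((m:ℝ) * (m + 1)) := by ring
      have e2 : K * εbar * (i * Δy) * ((i + 1) * Δy) = K * εbar * Δy ^ 2 * ((i:ℝ) * (i + 1)) := by ring
      rw [e1, e2]
      apply mul_le_mul_of_nonneg_left hmi
      positivity
    linarith
  have hgauss : ∀ i : ℕ, ∑ j ∈ Icc 1 i, (j : ℝ) = i * (i + 1) / 2 := by
    intro i
    induction i with
    | zero => simp
    | succ n ih =>
      rw [Finset.sum_Icc_succ_top (by omega : 1 ≤ n + 1), ih]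
      push_cast; ring
  have main : ∀ i, u i ≤ C i * (1 + K * Δy) ^ i := by
    intro i
    induction i using Nat.strong_induction_on with
    | _ i ih =>
      match i with
      | 0 =>
        simpa [hC] using hu0
      | Nat.succ n =>
        set i := n + 1
        have hi : 1 ≤ i := by omega
        have h1 := hrec i hi
        -- bound the sum termwise
        have hsum1 : ∑ j ∈ Icc 1 i, (b ^ j * u (i - j) + (j : ℝ) * Δy * εbar)
            ≤ ∑ j ∈ Icc 1 i, (u (i - j) + (j : ℝ) * Δy * εbar) := by
          apply Finset.sum_le_sum
          intro j hj
          have hbj : b ^ j ≤ 1 := pow_le_one₀ hb0 hb1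
          have := mul_le_of_le_one_left (hu (i - j)) hbj
          linarith
        have hre : ∑ j ∈ Icc 1 i, u (i - j) = ∑ m ∈ range i, u m := by
          rw [← Finset.Ico_add_one_right_eq_Icc, Finset.sum_Ico_eq_sum_range]
          have : ∀ j ∈ range (i + 1 - 1), u (i - (1 + j)) = u (i - 1 - j) := by
            intro j _
            congr 1
            omega
          rw [Finset.sum_congr rfl this]
          simpa using Finset.sum_range_reflect u i
        have hsum2 : ∑ m ∈ range i, u m ≤ C i * ∑ m ∈ range i, (1 + K * Δy) ^ m := by
          rw [Finset.mul_sum]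
          apply Finset.sum_le_sum
          intro m hm
          have hm' : m < i := Finset.mem_range.mp hm
          calc u m ≤ C m * (1 + K * Δy) ^ m := ih m hm'
            _ ≤ C i * (1 + K * Δy) ^ m := by
              apply mul_le_mul_of_nonneg_right (hCmono m i hm'.le)
              positivity
        have hgeom : (∑ m ∈ range i, (1 + K * Δy) ^ m) * (K * Δy) = (1 + K * Δy) ^ i - 1 := by
          have := geom_sum_mul (1 + K * Δy) i
          simpa using this
        -- combine
        have hε : ∑ j ∈ Icc 1 i, (j : ℝ) * Δy * εbar = (i * (i + 1) / 2) * Δy * εbar := by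
          rw [← Finset.sum_mul, ← Finset.sum_mul, hgauss]
        have key : K * Δy * ∑ j ∈ Icc 1 i, (b ^ j * u (i - j) + (j : ℝ) * Δy * εbar) + Rbar
            ≤ C i * (1 + K * Δy) ^ i := by
          have h2 : ∑ j ∈ Icc 1 i, (u (i - j) + (j : ℝ) * Δy * εbar)
              = ∑ m ∈ range i, u m + (i * (i + 1) / 2) * Δy * εbar := by
            rw [Finset.sum_add_distrib, hre, hε]
          have h3 : K * Δy * ∑ j ∈ Icc 1 i, (b ^ j * u (i - j) + (j : ℝ) * Δy * εbar)
              ≤ K * Δy * (∑ m ∈ range i, u m + (i * (i + 1) / 2) * Δy * εbar) := by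
            apply mul_le_mul_of_nonneg_left _ (by positivity)
            rw [← h2]; exact hsum1
          have h4 : K * Δy * ∑ m ∈ range i, u m ≤ C i * ((1 + K * Δy) ^ i - 1) := by
            calc K * Δy * ∑ m ∈ range i, u m
                ≤ K * Δy * (C i * ∑ m ∈ range i, (1 + K * Δy) ^ m) :=
                  mul_le_mul_of_nonneg_left hsum2 (by positivity)
              _ = C i * ((∑ m ∈ range i, (1 + K * Δy) ^ m) * (K * Δy)) := by ring
              _ = C i * ((1 + K * Δy) ^ i - 1) := by rw [hgeom]
          have h5 : K * Δy * ((i * (i + 1) / 2) * Δy * εbar) = C i - Rbar := by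
            simp only [hC]; push_cast; ring
          have h6 : K * Δy * (∑ m ∈ range i, u m + (i * (i + 1) / 2) * Δy * εbar)
              = K * Δy * ∑ m ∈ range i, u m + (C i - Rbar) := by
            rw [← h5]; ring
          calc K * Δy * ∑ j ∈ Icc 1 i, (b ^ j * u (i - j) + (j : ℝ) * Δy * εbar) + Rbar
              ≤ K * Δy * (∑ m ∈ range i, u m + (i * (i + 1) / 2) * Δy * εbar) + Rbar := by
                linarith
            _ = K * Δy * ∑ m ∈ range i, u m + (C i - Rbar) + Rbar := by rw [h6]
            _ ≤ C i * ((1 + K * Δy) ^ i - 1) + (C i - Rbar) + Rbar := by linarith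
            _ = C i * (1 + K * Δy) ^ i := by ring
        exact h1.trans key
  intro i
  refine ⟨main i, ?_⟩
  have h1 := main i
  have hC2 : C i ≤ Rbar + K * εbar * ((i + 1) * Δy) ^ 2 / 2 := by
    simp only [hC]
    have hi : (0:ℝ) ≤ (i:ℝ) := Nat.cast_nonneg i
    nlinarith [mul_nonneg hK hεbar, sq_nonneg Δy]
  have hexp : (1 + K * Δy) ^ i ≤ exp (K * i * Δy) := by
    have h1x : 1 + K * Δy ≤ exp (K * Δy) := by
      have := Real.add_one_le_exp (K * Δy)
      linarith
    calc (1 + K * Δy) ^ i ≤ (exp (K * Δy)) ^ i := by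
          apply pow_le_pow_left₀ (by positivity) h1x
      _ = exp (K * i * Δy) := by
          rw [← Real.exp_nat_mul]; ring_nf
  calc u i ≤ C i * (1 + K * Δy) ^ i := h1
    _ ≤ (Rbar + K * εbar * ((i + 1) * Δy) ^ 2 / 2) * exp (K * i * Δy) := by
        apply mul_le_mul hC2 hexp (by positivity) (by positivity)
end

section
/- Geometric-exponential summation estimate (used in the proof of Theorem 5.2): Let Δy > 0, K ≥ 0, and L ≥ 0 with L·Δy ≤ 1 and K + L > 0. Then for every n ∈ ℕ, Δy·∑_{m=0}^{n} (1 − L·Δy)^{n−m}·exp(K·m·Δy) ≤ exp(K·n·Δy)·(1 + K·Δy)/(K + L). -/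
open Finset Real in
/-- Geometric-exponential summation estimate used in the proof of Theorem 5.2. -/
theorem geometric_exponential_sum_estimate
    (Δy : ℝ) (hΔy : 0 < Δy)
    (K : ℝ) (hK : 0 ≤ K)
    (L : ℝ) (hL : 0 ≤ L) (hLΔy : L * Δy ≤ 1) (hKL : 0 < K + L) :
    ∀ n : ℕ,
      Δy * ∑ m ∈ range (n + 1), (1 - L * Δy) ^ (n - m) * exp (K * m * Δy)
        ≤ exp (K * n * Δy) * (1 + K * Δy) / (K + L) := by
  intro n
  induction n with
  | zero =>
    rw [Finset.sum_range_one]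
    norm_num
    rw [le_div_iff₀ hKL]
    nlinarith
  | succ n ih =>
    have h1 : 0 ≤ 1 - L * Δy := by linarith
    rw [Finset.sum_range_succ]
    have hsum : ∑ m ∈ range (n + 1), (1 - L * Δy) ^ (n + 1 - m) * exp (K * m * Δy)
        = (1 - L * Δy) * ∑ m ∈ range (n + 1), (1 - L * Δy) ^ (n - m) * exp (K * m * Δy) := by
      rw [Finset.mul_sum]
      refine Finset.sum_congr rfl fun m hm => ?_
      rw [Finset.mem_range] at hm
      have h : n + 1 - m = (n - m) + 1 := by omega
      rw [h, pow_succ]; ring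
    rw [hsum, Nat.sub_self, pow_zero, one_mul]
    have hexp : exp (K * n * Δy) * (1 + K * Δy) ≤ exp (K * (n + 1 : ℕ) * Δy) := by
      have he : exp (K * (n + 1 : ℕ) * Δy) = exp (K * n * Δy) * exp (K * Δy) := by
        rw [← exp_add]; push_cast; ring_nf
      rw [he]
      have h2 : 1 + K * Δy ≤ exp (K * Δy) := by
        have := add_one_le_exp (K * Δy); linarith
      have h3 : 0 < exp (K * n * Δy) := exp_pos _
      nlinarith
    rw [le_div_iff₀ hKL] at ih ⊢
    have hE : 0 < exp (K * (n + 1 : ℕ) * Δy) := exp_pos _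
    nlinarith [mul_le_mul_of_nonneg_left ih h1, mul_le_mul_of_nonneg_left hexp h1]
end

section
/- Reduction of the Liouville-Master equation to a memoryless master equation in the Markovian (constant hazard) case: Let S ≥ 1, μ ≥ 0, let q : {1,…,S} × {1,…,S} → ℝ, let A_s : ℝ → ℝ be continuous for each s, and let F_s : ℝ³ → ℝ (arguments (x,y,t)) be continuously differentiable for each s. Assume: (i) for all x ∈ ℝ, t > 0 and 0 < y < t, ∂_t F_s(x,y,t) + A_s(x)·∂_x F_s(x,y,t) + ∂_y F_s(x,y,t) = −μ·F_s(x,y,t); (ii) F_s(x,y,t) = 0 whenever y ≥ t; (iii) for all x and t > 0, F_s(x,0,t) = μ·∑_{j=1}^{S} q_{sj}·∫_0^t F_j(x,y,t) dy. Then the functions 𝓕_s(x,t) := ∫_0^t F_s(x,y,t) dy possess partial derivatives in t and x for t > 0 and satisfy ∂_t 𝓕_s(x,t) + A_s(x)·∂_x 𝓕_s(x,t) = μ·∑_{j=1}^{S} (q_{sj} − δ_{sj})·𝓕_j(x,t), where δ_{sj} is the Kronecker delta. -/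
/-!
In the Markovian case the memory variable `y` can be integrated out. Integrating the
Liouville–Master equation over `0 < y < t`, the `∂_y F` term contributes
`F(x, t, t) - F(x, 0, t) = -F(x, 0, t)`, which the boundary condition turns into the gain term
`μ ∑ⱼ q_{sj} 𝓕ⱼ`, while `-μ F` integrates to the loss term `-μ 𝓕_s`. Differentiating `𝓕_s` in `t`
under the integral produces no boundary term because `F` vanishes for `y ≥ t`.
-/

open MeasureTheory intervalIntegral Set Filter

section ParametricIntegral

variable {E : Type*} [NormedAddCommGroup E] [NormedSpace ℝ E]

theorem ContDiff.continuous_deriv_fst {X : Type*} [NormedAddCommGroup X] [NormedSpace ℝ X]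
    {h : ℝ × X → E} (hh : ContDiff ℝ 1 h) :
    Continuous fun p : ℝ × X => deriv (fun u => h (u, p.2)) p.1 := by
  have hpartial : ∀ p : ℝ × X, deriv (fun u => h (u, p.2)) p.1 = fderiv ℝ h p (1, 0) := fun p =>
    ((hh.differentiable one_ne_zero p).hasFDerivAt.comp_hasDerivAt p.1
      ((hasDerivAt_id p.1).prodMk (hasDerivAt_const p.1 p.2))).deriv
  simp only [hpartial]
  exact (hh.continuous_fderiv one_ne_zero).clm_apply continuous_const

theorem hasDerivAt_intervalIntegral_of_continuous {G : ℝ → ℝ → E}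
    (hG : Continuous fun p : ℝ × ℝ => G p.1 p.2)
    (hG' : Continuous fun p : ℝ × ℝ => deriv (G · p.2) p.1)
    (hd : ∀ u y, DifferentiableAt ℝ (G · y) u) (a b u₀ : ℝ) :
    HasDerivAt (fun u => ∫ y in a..b, G u y) (∫ y in a..b, deriv (G · y) u₀) u₀ := by
  obtain ⟨C, hC⟩ := ((isCompact_closedBall u₀ 1).prod isCompact_uIcc).exists_bound_of_continuousOn
    hG'.continuousOn
  refine (hasDerivAt_integral_of_dominated_loc_of_deriv_le (μ := volume) (F := G)
    (F' := fun u y => deriv (G · y) u) (bound := fun _ => C)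
    (Metric.ball_mem_nhds u₀ one_pos) ?_ ?_ ?_ ?_ intervalIntegrable_const ?_).2
  · exact .of_forall fun u =>
      (hG.comp (by fun_prop : Continuous fun y : ℝ => (u, y))).aestronglyMeasurable.restrict
  · exact (hG.comp (by fun_prop : Continuous fun y : ℝ => (u₀, y))).intervalIntegrable a b
  · exact (hG'.comp (by fun_prop : Continuous fun y : ℝ => (u₀, y))).aestronglyMeasurable.restrict
  · exact .of_forall fun y hy u hu =>
      hC (u, y) ⟨Metric.ball_subset_closedBall hu, uIoc_subset_uIcc hy⟩
  · exact .of_forall fun y _ u _ => (hd u y).hasDerivAt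

theorem hasDerivAt_intervalIntegral_of_contDiff {G : ℝ → ℝ → E}
    (hG : ContDiff ℝ 1 fun p : ℝ × ℝ => G p.1 p.2) (a b u₀ : ℝ) :
    HasDerivAt (fun u => ∫ y in a..b, G u y) (∫ y in a..b, deriv (G · y) u₀) u₀ :=
  hasDerivAt_intervalIntegral_of_continuous hG.continuous hG.continuous_deriv_fst
    (fun u y => (hG.differentiable one_ne_zero _).comp (f := fun u : ℝ => (u, y)) u (by fun_prop))
    a b u₀

/-- Near `t` the upper limit can be frozen at `t + 1`, because the integrand vanishes beyond the
diagonal; for the same reason `∂_t G` vanishes on `(t, t + 1]`. -/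
theorem hasDerivAt_integral_upper_of_contDiff {G : ℝ → ℝ → E}
    (hG : ContDiff ℝ 1 fun p : ℝ × ℝ => G p.1 p.2) (hzero : ∀ t y, t ≤ y → G t y = 0) (a t : ℝ) :
    HasDerivAt (fun t' => ∫ y in a..t', G t' y) (∫ y in a..t, deriv (G · y) t) t := by
  have hcont : ∀ t, Continuous (G t) := fun t =>
    hG.continuous.comp (by fun_prop : Continuous fun y : ℝ => (t, y))
  have hfreeze : ∀ t' ≤ t + 1, ∫ y in a..t', G t' y = ∫ y in a..t + 1, G t' y := by
    intro t' ht'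
    have hbeyond : ∫ y in t'..t + 1, G t' y = 0 := by
      rw [integral_congr (g := 0) fun y hy => hzero t' y (uIcc_of_le ht' ▸ hy).1]
      simp
    rw [← integral_add_adjacent_intervals ((hcont t').intervalIntegrable a t')
      ((hcont t').intervalIntegrable t' (t + 1)), hbeyond, add_zero]
  have hderiv_zero : ∀ y, t < y → deriv (G · y) t = 0 := fun y hy =>
    (EventuallyEq.deriv_eq (eventually_lt_nhds hy |>.mono fun t' ht' => hzero t' y ht'.le)).trans
      (deriv_const t 0)
  have hcont' : Continuous fun y => deriv (G · y) t :=
    hG.continuous_deriv_fst.comp (by fun_prop : Continuous fun y : ℝ => (t, y))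
  have htail : ∫ y in a..t + 1, deriv (G · y) t = ∫ y in a..t, deriv (G · y) t := by
    rw [← integral_add_adjacent_intervals (hcont'.intervalIntegrable a t)
      (hcont'.intervalIntegrable t (t + 1)),
      integral_congr_Ioo_of_le (g := 0) (by linarith) fun y hy => hderiv_zero y hy.1]
    simp
  rw [← htail]
  exact (hasDerivAt_intervalIntegral_of_contDiff hG a (t + 1) t).congr_of_eventuallyEq
    (eventually_le_nhds (by linarith) |>.mono fun t' ht' => hfreeze t' ht')

end ParametricIntegral

theorem integral_add_mul_integral_eq_of_transport {φ φt φx : ℝ → ℝ} {a c b t : ℝ} (hbt : b ≤ t)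
    (hφ : ContDiff ℝ 1 φ) (hφt : Continuous φt) (hφx : Continuous φx)
    (htransport : ∀ y ∈ Ioo b t, φt y + a * φx y + deriv φ y = c * φ y) :
    (∫ y in b..t, φt y) + a * ∫ y in b..t, φx y = φ b - φ t + c * ∫ y in b..t, φ y := by
  have hφ' : Continuous (deriv φ) := hφ.continuous_deriv le_rfl
  have hFTC : ∫ y in b..t, deriv φ y = φ t - φ b :=
    integral_deriv_eq_sub (fun y _ => hφ.differentiable one_ne_zero y) (hφ'.intervalIntegrable b t)
  have hφt_ax : Continuous fun y => φt y + a * φx y := by fun_prop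
  calc (∫ y in b..t, φt y) + a * ∫ y in b..t, φx y
      = (∫ y in b..t, φt y + a * φx y + deriv φ y) - ∫ y in b..t, deriv φ y := by
        rw [integral_add (hφt_ax.intervalIntegrable b t) (hφ'.intervalIntegrable b t),
          integral_add (g := fun y => a * φx y) (hφt.intervalIntegrable b t)
            ((continuous_const.mul hφx).intervalIntegrable b t),
          intervalIntegral.integral_const_mul]
        ring
    _ = φ b - φ t + c * ∫ y in b..t, φ y := by
        rw [integral_congr_Ioo_of_le hbt htransport, intervalIntegral.integral_const_mul, hFTC]
        ring

theorem Fintype.sum_sub_ite_mul {ι R : Type*} [Fintype ι] [DecidableEq ι] [CommRing R]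
    (q f : ι → R) (s : ι) :
    ∑ j, (q j - if s = j then 1 else 0) * f j = ∑ j, q j * f j - f s := by
  simp [sub_mul, Finset.sum_sub_distrib, ite_mul]

open MeasureTheory intervalIntegral in
theorem liouville_master_markovian_reduction_general
    (S : ℕ)
    (μ : ℝ)
    (q : Fin S → Fin S → ℝ)
    (A : Fin S → ℝ → ℝ)
    (F : Fin S → ℝ → ℝ → ℝ → ℝ)
    (hF : ∀ s, ContDiff ℝ 1 (fun p : ℝ × ℝ × ℝ => F s p.1 p.2.1 p.2.2))
    (hPDE : ∀ s (x y t : ℝ), 0 < t → 0 < y → y < t →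
      deriv (fun t' => F s x y t') t + A s x * deriv (fun x' => F s x' y t) x
        + deriv (fun y' => F s x y' t) y = -μ * F s x y t)
    (hmem : ∀ s (x y t : ℝ), t ≤ y → F s x y t = 0)
    (hbdry : ∀ s (x t : ℝ), 0 < t →
      F s x 0 t = μ * ∑ j : Fin S, q s j * ∫ y in (0:ℝ)..t, F j x y t) :
    ∀ s (x t : ℝ), 0 < t →
      ∃ dFt dFx : ℝ,
        HasDerivAt (fun t' => ∫ y in (0:ℝ)..t', F s x y t') dFt t
        ∧ HasDerivAt (fun x' => ∫ y in (0:ℝ)..t, F s x' y t) dFx x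
        ∧ dFt + A s x * dFx
          = μ * ∑ j : Fin S, (q s j - if s = j then 1 else 0)
              * ∫ y in (0:ℝ)..t, F j x y t := by
  intro s x t ht
  have hFt : ContDiff ℝ 1 fun p : ℝ × ℝ => F s x p.2 p.1 :=
    (hF s).comp (by fun_prop : ContDiff ℝ 1 fun p : ℝ × ℝ => (x, p.2, p.1))
  have hFx : ContDiff ℝ 1 fun p : ℝ × ℝ => F s p.1 p.2 t :=
    (hF s).comp (by fun_prop : ContDiff ℝ 1 fun p : ℝ × ℝ => (p.1, p.2, t))
  refine ⟨_, _, hasDerivAt_integral_upper_of_contDiff hFt (fun t' y => hmem s x y t') 0 t,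
    hasDerivAt_intervalIntegral_of_contDiff hFx 0 t x, ?_⟩
  have hintegrated := integral_add_mul_integral_eq_of_transport (φ := (F s x · t))
    (φt := fun y => deriv (F s x y ·) t) (φx := fun y => deriv (F s · y t) x) ht.le
    ((hF s).comp (by fun_prop : ContDiff ℝ 1 fun y : ℝ => (x, y, t)))
    (hFt.continuous_deriv_fst.comp (by fun_prop : Continuous fun y : ℝ => (t, y)))
    (hFx.continuous_deriv_fst.comp (by fun_prop : Continuous fun y : ℝ => (x, y)))
    fun y hy => hPDE s x y t ht hy.1 hy.2
  rw [Fintype.sum_sub_ite_mul, mul_sub, ← hbdry s x t ht]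
  rw [hintegrated, hmem s x t t le_rfl]
  ring

open MeasureTheory intervalIntegral in
/-- Reduction of the Liouville-Master equation to a memoryless master equation
in the Markovian (constant hazard) case (Section 2). -/
theorem liouville_master_markovian_reduction
    (S : ℕ) (hS : 1 ≤ S)
    (μ : ℝ) (hμ : 0 ≤ μ)
    (q : Fin S → Fin S → ℝ)
    (A : Fin S → ℝ → ℝ) (hA : ∀ s, Continuous (A s))
    (F : Fin S → ℝ → ℝ → ℝ → ℝ)
    (hF : ∀ s, ContDiff ℝ 1 (fun p : ℝ × ℝ × ℝ => F s p.1 p.2.1 p.2.2))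
    (hPDE : ∀ s (x y t : ℝ), 0 < t → 0 < y → y < t →
      deriv (fun t' => F s x y t') t + A s x * deriv (fun x' => F s x' y t) x
        + deriv (fun y' => F s x y' t) y = -μ * F s x y t)
    (hmem : ∀ s (x y t : ℝ), t ≤ y → F s x y t = 0)
    (hbdry : ∀ s (x t : ℝ), 0 < t →
      F s x 0 t = μ * ∑ j : Fin S, q s j * ∫ y in (0:ℝ)..t, F j x y t) :
    ∀ s (x t : ℝ), 0 < t →
      ∃ dFt dFx : ℝ,
        HasDerivAt (fun t' => ∫ y in (0:ℝ)..t', F s x y t') dFt t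
        ∧ HasDerivAt (fun x' => ∫ y in (0:ℝ)..t, F s x' y t) dFx x
        ∧ dFt + A s x * dFx
          = μ * ∑ j : Fin S, (q s j - if s = j then 1 else 0)
              * ∫ y in (0:ℝ)..t, F j x y t :=
  liouville_master_markovian_reduction_general S μ q A F hF hPDE hmem hbdry
end
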